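/- In a †-mix category, if an object A lies in the core (the mixors mx_{A,−} and mx_{−,A} are isomorphisms), then A† also lies in the core. -/

import Mathlib

open CategoryTheory

universe v u v₂ u₂ v₃ u₃

/-- A linearly distributive category (LDC): a category with two monoidal structures
`T = (⊗, ⊤)` (tensor) and `P = (⊕, ⊥)` (par), linked by natural linear distributors
`∂L : A ⊗ (B ⊕ X) ⟶ (A ⊗ B) ⊕ X` and `∂R : (A ⊕ B) ⊗ X ⟶ A ⊕ (B ⊗ X)`
(satisfying the Cockett–Seely coherence conditions). -/
structure LDC (C : Type u) [Category.{v} C] where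
  T : MonoidalCategory C
  P : MonoidalCategory C
  distL : ∀ A B X : C, T.tensorObj A (P.tensorObj B X) ⟶ P.tensorObj (T.tensorObj A B) X
  distR : ∀ A B X : C, T.tensorObj (P.tensorObj A B) X ⟶ P.tensorObj A (T.tensorObj B X)
  distL_natural : ∀ {A A' B B' X X' : C} (f : A ⟶ A') (g : B ⟶ B') (h : X ⟶ X'),
    T.tensorHom f (P.tensorHom g h) ≫ distL A' B' X'
      = distL A B X ≫ P.tensorHom (T.tensorHom f g) h
  distR_natural : ∀ {A A' B B' X X' : C} (f : A ⟶ A') (g : B ⟶ B') (h : X ⟶ X'),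
    T.tensorHom (P.tensorHom f g) h ≫ distR A' B' X'
      = distR A B X ≫ P.tensorHom f (T.tensorHom g h)

namespace LDC

variable {C : Type u} [Category.{v} C]

/-- tensor on objects -/
abbrev ot (L : LDC C) (A B : C) : C := L.T.tensorObj A B
/-- par on objects -/
abbrev op (L : LDC C) (A B : C) : C := L.P.tensorObj A B
/-- tensor unit ⊤ -/
abbrev tu (L : LDC C) : C := L.T.tensorUnit
/-- par unit ⊥ -/
abbrev pu (L : LDC C) : C := L.P.tensorUnit
/-- tensor on morphisms -/
abbrev oth (L : LDC C) {A B A' B' : C} (f : A ⟶ A') (g : B ⟶ B') :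
    L.ot A B ⟶ L.ot A' B' := L.T.tensorHom f g
/-- par on morphisms -/
abbrev oph (L : LDC C) {A B A' B' : C} (f : A ⟶ A') (g : B ⟶ B') :
    L.op A B ⟶ L.op A' B' := L.P.tensorHom f g
/-- associator of the tensor -/
abbrev aT (L : LDC C) (A B X : C) : L.ot (L.ot A B) X ≅ L.ot A (L.ot B X) := L.T.associator A B X
/-- associator of the par -/
abbrev aP (L : LDC C) (A B X : C) : L.op (L.op A B) X ≅ L.op A (L.op B X) := L.P.associator A B X
/-- left unitor of the tensor -/
abbrev luT (L : LDC C) (A : C) : L.ot L.tu A ≅ A := L.T.leftUnitor A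
/-- right unitor of the tensor -/
abbrev ruT (L : LDC C) (A : C) : L.ot A L.tu ≅ A := L.T.rightUnitor A
/-- left unitor of the par -/
abbrev luP (L : LDC C) (A : C) : L.op L.pu A ≅ A := L.P.leftUnitor A
/-- right unitor of the par -/
abbrev ruP (L : LDC C) (A : C) : L.op A L.pu ≅ A := L.P.rightUnitor A

end LDC

section LinearFunctor

variable {C : Type u} [Category.{v} C] {D : Type u₂} [Category.{v₂} D]

/-- The data of a linear functor between LDCs: a pair of functors `Ft` (tensor part,
lax `⊗`-monoidal via `mT, mU`) and `Fp` (par part, `⊕`-comonoidal via `nP, nU`), together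
with the four linear strengths `vtR, vtL, vpR, vpL`. -/
structure LinearFunctorData (X : LDC C) (Y : LDC D) where
  Ft : C ⥤ D
  Fp : C ⥤ D
  mT : ∀ A B : C, Y.ot (Ft.obj A) (Ft.obj B) ⟶ Ft.obj (X.ot A B)
  mU : Y.tu ⟶ Ft.obj X.tu
  nP : ∀ A B : C, Fp.obj (X.op A B) ⟶ Y.op (Fp.obj A) (Fp.obj B)
  nU : Fp.obj X.pu ⟶ Y.pu
  vtR : ∀ A B : C, Ft.obj (X.op A B) ⟶ Y.op (Fp.obj A) (Ft.obj B)
  vtL : ∀ A B : C, Ft.obj (X.op A B) ⟶ Y.op (Ft.obj A) (Fp.obj B)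
  vpR : ∀ A B : C, Y.ot (Ft.obj A) (Fp.obj B) ⟶ Fp.obj (X.ot A B)
  vpL : ∀ A B : C, Y.ot (Fp.obj A) (Ft.obj B) ⟶ Fp.obj (X.ot A B)

/-- The coherence laws of a linear functor: naturality of all the structure maps,
lax monoidality of `(Ft, mT, mU)`, comonoidality of `(Fp, nP, nU)`, and the
Cockett–Seely coherences [LF.1]–[LF.5]. -/
structure LinearFunctorLaws {X : LDC C} {Y : LDC D} (F : LinearFunctorData X Y) : Prop where
  mT_natural : ∀ {A A' B B' : C} (f : A ⟶ A') (g : B ⟶ B'),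
    Y.oth (F.Ft.map f) (F.Ft.map g) ≫ F.mT A' B' = F.mT A B ≫ F.Ft.map (X.oth f g)
  mT_assoc : ∀ A B Cc : C,
    Y.oth (F.mT A B) (𝟙 (F.Ft.obj Cc)) ≫ F.mT (X.ot A B) Cc ≫ F.Ft.map (X.aT A B Cc).hom
      = (Y.aT (F.Ft.obj A) (F.Ft.obj B) (F.Ft.obj Cc)).hom
          ≫ Y.oth (𝟙 (F.Ft.obj A)) (F.mT B Cc) ≫ F.mT A (X.ot B Cc)
  mT_lu : ∀ A : C,
    Y.oth F.mU (𝟙 (F.Ft.obj A)) ≫ F.mT X.tu A ≫ F.Ft.map (X.luT A).hom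
      = (Y.luT (F.Ft.obj A)).hom
  mT_ru : ∀ A : C,
    Y.oth (𝟙 (F.Ft.obj A)) F.mU ≫ F.mT A X.tu ≫ F.Ft.map (X.ruT A).hom
      = (Y.ruT (F.Ft.obj A)).hom
  nP_natural : ∀ {A A' B B' : C} (f : A ⟶ A') (g : B ⟶ B'),
    F.Fp.map (X.oph f g) ≫ F.nP A' B' = F.nP A B ≫ Y.oph (F.Fp.map f) (F.Fp.map g)
  nP_assoc : ∀ A B Cc : C,
    F.nP (X.op A B) Cc ≫ Y.oph (F.nP A B) (𝟙 (F.Fp.obj Cc))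
        ≫ (Y.aP (F.Fp.obj A) (F.Fp.obj B) (F.Fp.obj Cc)).hom
      = F.Fp.map (X.aP A B Cc).hom ≫ F.nP A (X.op B Cc) ≫ Y.oph (𝟙 (F.Fp.obj A)) (F.nP B Cc)
  nP_lu : ∀ A : C,
    F.Fp.map (X.luP A).hom
      = F.nP X.pu A ≫ Y.oph F.nU (𝟙 (F.Fp.obj A)) ≫ (Y.luP (F.Fp.obj A)).hom
  nP_ru : ∀ A : C,
    F.Fp.map (X.ruP A).hom
      = F.nP A X.pu ≫ Y.oph (𝟙 (F.Fp.obj A)) F.nU ≫ (Y.ruP (F.Fp.obj A)).hom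
  vtR_natural : ∀ {A A' B B' : C} (f : A ⟶ A') (g : B ⟶ B'),
    F.Ft.map (X.oph f g) ≫ F.vtR A' B' = F.vtR A B ≫ Y.oph (F.Fp.map f) (F.Ft.map g)
  vtL_natural : ∀ {A A' B B' : C} (f : A ⟶ A') (g : B ⟶ B'),
    F.Ft.map (X.oph f g) ≫ F.vtL A' B' = F.vtL A B ≫ Y.oph (F.Ft.map f) (F.Fp.map g)
  vpR_natural : ∀ {A A' B B' : C} (f : A ⟶ A') (g : B ⟶ B'),
    Y.oth (F.Ft.map f) (F.Fp.map g) ≫ F.vpR A' B' = F.vpR A B ≫ F.Fp.map (X.oth f g)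
  vpL_natural : ∀ {A A' B B' : C} (f : A ⟶ A') (g : B ⟶ B'),
    Y.oth (F.Fp.map f) (F.Ft.map g) ≫ F.vpL A' B' = F.vpL A B ≫ F.Fp.map (X.oth f g)
  lf1a : ∀ A : C,
    F.Ft.map (X.luP A).hom
      = F.vtR X.pu A ≫ Y.oph F.nU (𝟙 (F.Ft.obj A)) ≫ (Y.luP (F.Ft.obj A)).hom
  lf1b : ∀ A : C,
    F.Ft.map (X.ruP A).hom
      = F.vtL A X.pu ≫ Y.oph (𝟙 (F.Ft.obj A)) F.nU ≫ (Y.ruP (F.Ft.obj A)).hom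
  lf1c : ∀ A : C,
    (Y.luT (F.Fp.obj A)).inv ≫ Y.oth F.mU (𝟙 (F.Fp.obj A)) ≫ F.vpR X.tu A
      = F.Fp.map (X.luT A).inv
  lf1d : ∀ A : C,
    (Y.ruT (F.Fp.obj A)).inv ≫ Y.oth (𝟙 (F.Fp.obj A)) F.mU ≫ F.vpL A X.tu
      = F.Fp.map (X.ruT A).inv
  lf2a : ∀ A B Cc : C,
    F.Ft.map (X.aP A B Cc).hom ≫ F.vtR A (X.op B Cc) ≫ Y.oph (𝟙 (F.Fp.obj A)) (F.vtR B Cc)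
      = F.vtR (X.op A B) Cc ≫ Y.oph (F.nP A B) (𝟙 (F.Ft.obj Cc))
          ≫ (Y.aP (F.Fp.obj A) (F.Fp.obj B) (F.Ft.obj Cc)).hom
  lf2b : ∀ A B Cc : C,
    F.Ft.map (X.aP A B Cc).hom ≫ F.vtL A (X.op B Cc) ≫ Y.oph (𝟙 (F.Ft.obj A)) (F.nP B Cc)
      = F.vtL (X.op A B) Cc ≫ Y.oph (F.vtL A B) (𝟙 (F.Fp.obj Cc))
          ≫ (Y.aP (F.Ft.obj A) (F.Fp.obj B) (F.Fp.obj Cc)).hom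
  lf2c : ∀ A B Cc : C,
    Y.oth (F.mT A B) (𝟙 (F.Fp.obj Cc)) ≫ F.vpR (X.ot A B) Cc ≫ F.Fp.map (X.aT A B Cc).hom
      = (Y.aT (F.Ft.obj A) (F.Ft.obj B) (F.Fp.obj Cc)).hom
          ≫ Y.oth (𝟙 (F.Ft.obj A)) (F.vpR B Cc) ≫ F.vpR A (X.ot B Cc)
  lf2d : ∀ A B Cc : C,
    Y.oth (F.vpL A B) (𝟙 (F.Ft.obj Cc)) ≫ F.vpL (X.ot A B) Cc ≫ F.Fp.map (X.aT A B Cc).hom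
      = (Y.aT (F.Fp.obj A) (F.Ft.obj B) (F.Ft.obj Cc)).hom
          ≫ Y.oth (𝟙 (F.Fp.obj A)) (F.mT B Cc) ≫ F.vpL A (X.ot B Cc)
  lf3a : ∀ A B Cc : C,
    F.Ft.map (X.aP A B Cc).hom ≫ F.vtR A (X.op B Cc) ≫ Y.oph (𝟙 (F.Fp.obj A)) (F.vtL B Cc)
      = F.vtL (X.op A B) Cc ≫ Y.oph (F.vtR A B) (𝟙 (F.Fp.obj Cc))
          ≫ (Y.aP (F.Fp.obj A) (F.Ft.obj B) (F.Fp.obj Cc)).hom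
  lf3b : ∀ A B Cc : C,
    Y.oth (F.vpR A B) (𝟙 (F.Ft.obj Cc)) ≫ F.vpL (X.ot A B) Cc ≫ F.Fp.map (X.aT A B Cc).hom
      = (Y.aT (F.Ft.obj A) (F.Fp.obj B) (F.Ft.obj Cc)).hom
          ≫ Y.oth (𝟙 (F.Ft.obj A)) (F.vpL B Cc) ≫ F.vpR A (X.ot B Cc)
  lf4a : ∀ A B Cc : C,
    Y.oth (𝟙 (F.Ft.obj A)) (F.vtR B Cc)
        ≫ Y.distL (F.Ft.obj A) (F.Fp.obj B) (F.Ft.obj Cc)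
        ≫ Y.oph (F.vpR A B) (𝟙 (F.Ft.obj Cc))
      = F.mT A (X.op B Cc) ≫ F.Ft.map (X.distL A B Cc) ≫ F.vtR (X.ot A B) Cc
  lf4b : ∀ A B Cc : C,
    Y.oth (F.vtL A B) (𝟙 (F.Ft.obj Cc))
        ≫ Y.distR (F.Ft.obj A) (F.Fp.obj B) (F.Ft.obj Cc)
        ≫ Y.oph (𝟙 (F.Ft.obj A)) (F.vpL B Cc)
      = F.mT (X.op A B) Cc ≫ F.Ft.map (X.distR A B Cc) ≫ F.vtL A (X.ot B Cc)
  lf4c : ∀ A B Cc : C,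
    Y.oth (𝟙 (F.Fp.obj A)) (F.vtL B Cc)
        ≫ Y.distL (F.Fp.obj A) (F.Ft.obj B) (F.Fp.obj Cc)
        ≫ Y.oph (F.vpL A B) (𝟙 (F.Fp.obj Cc))
      = F.vpL A (X.op B Cc) ≫ F.Fp.map (X.distL A B Cc) ≫ F.nP (X.ot A B) Cc
  lf4d : ∀ A B Cc : C,
    Y.oth (F.vtR A B) (𝟙 (F.Fp.obj Cc))
        ≫ Y.distR (F.Fp.obj A) (F.Ft.obj B) (F.Fp.obj Cc)
        ≫ Y.oph (𝟙 (F.Fp.obj A)) (F.vpR B Cc)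
      = F.vpR (X.op A B) Cc ≫ F.Fp.map (X.distR A B Cc) ≫ F.nP A (X.ot B Cc)
  lf5a : ∀ A B Cc : C,
    Y.oth (𝟙 (F.Ft.obj A)) (F.vtL B Cc)
        ≫ Y.distL (F.Ft.obj A) (F.Ft.obj B) (F.Fp.obj Cc)
        ≫ Y.oph (F.mT A B) (𝟙 (F.Fp.obj Cc))
      = F.mT A (X.op B Cc) ≫ F.Ft.map (X.distL A B Cc) ≫ F.vtL (X.ot A B) Cc
  lf5b : ∀ A B Cc : C,
    Y.oth (F.vtR A B) (𝟙 (F.Ft.obj Cc))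
        ≫ Y.distR (F.Fp.obj A) (F.Ft.obj B) (F.Ft.obj Cc)
        ≫ Y.oph (𝟙 (F.Fp.obj A)) (F.mT B Cc)
      = F.mT (X.op A B) Cc ≫ F.Ft.map (X.distR A B Cc) ≫ F.vtR A (X.ot B Cc)
  lf5c : ∀ A B Cc : C,
    Y.oth (𝟙 (F.Ft.obj A)) (F.nP B Cc)
        ≫ Y.distL (F.Ft.obj A) (F.Fp.obj B) (F.Fp.obj Cc)
        ≫ Y.oph (F.vpR A B) (𝟙 (F.Fp.obj Cc))
      = F.vpR A (X.op B Cc) ≫ F.Fp.map (X.distL A B Cc) ≫ F.nP (X.ot A B) Cc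
  lf5d : ∀ A B Cc : C,
    Y.oth (F.nP A B) (𝟙 (F.Ft.obj Cc))
        ≫ Y.distR (F.Fp.obj A) (F.Fp.obj B) (F.Ft.obj Cc)
        ≫ Y.oph (𝟙 (F.Fp.obj A)) (F.vpL B Cc)
      = F.vpL (X.op A B) Cc ≫ F.Fp.map (X.distR A B Cc) ≫ F.nP A (X.ot B Cc)

/-- A linear functor between LDCs. -/
structure LinearFunctor (X : LDC C) (Y : LDC D) extends LinearFunctorData X Y where
  laws : LinearFunctorLaws toLinearFunctorData

end LinearFunctor
section Mix

variable {C : Type u} [Category.{v} C] {D : Type u₂} [Category.{v₂} D]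

/-- A mix category: an LDC with a mix map `m : ⊥ ⟶ ⊤` such that the two canonical
composites `A ⊗ B ⟶ A ⊕ B` (via the unitors, `m`, and the two linear distributors)
coincide. -/
structure MixCat (C : Type u) [Category.{v} C] where
  X : LDC C
  mix : X.pu ⟶ X.tu
  mix_coh : ∀ A B : C,
    X.oth (𝟙 A) ((X.luP B).inv ≫ X.oph mix (𝟙 B)) ≫ X.distL A X.tu B
        ≫ X.oph (X.ruT A).hom (𝟙 B)
      = X.oth ((X.ruP A).inv) (𝟙 B) ≫ X.distR A X.pu B
        ≫ X.oph (𝟙 A) (X.oth mix (𝟙 B) ≫ (X.luT B).hom)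

/-- The mixor `mx : A ⊗ B ⟶ A ⊕ B` of a mix category. -/
def MixCat.mx (M : MixCat C) (A B : C) : M.X.ot A B ⟶ M.X.op A B :=
  M.X.oth (𝟙 A) ((M.X.luP B).inv ≫ M.X.oph M.mix (𝟙 B)) ≫ M.X.distL A M.X.tu B
    ≫ M.X.oph (M.X.ruT A).hom (𝟙 B)

/-- An object is in the core of a mix category when all mixors out of it and into it
are isomorphisms. -/
def MixCat.inCore (M : MixCat C) (U : C) : Prop :=
  (∀ B : C, IsIso (M.mx U B)) ∧ (∀ B : C, IsIso (M.mx B U))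

/-- An isomix category: a mix category whose mix map is an isomorphism
(with specified inverse). -/
structure IsomixCat (C : Type u) [Category.{v} C] extends MixCat C where
  mixInv : X.tu ⟶ X.pu
  mix_mixInv : mix ≫ mixInv = 𝟙 X.pu
  mixInv_mix : mixInv ≫ mix = 𝟙 X.tu

/-- A Frobenius (linear) functor between LDCs: a linear functor whose tensor and par
parts coincide (`Ft = Fp = F`), with `m⊗ = ν⊕ᴸ = ν⊕ᴿ` and `n⊕ = ν⊗ᴸ = ν⊗ᴿ`. -/
structure FrobFunctor (X : LDC C) (Y : LDC D) where
  F : C ⥤ D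
  mT : ∀ A B : C, Y.ot (F.obj A) (F.obj B) ⟶ F.obj (X.ot A B)
  mU : Y.tu ⟶ F.obj X.tu
  nP : ∀ A B : C, F.obj (X.op A B) ⟶ Y.op (F.obj A) (F.obj B)
  nU : F.obj X.pu ⟶ Y.pu
  laws : LinearFunctorLaws (X := X) (Y := Y) ⟨F, F, mT, mU, nP, nU, nP, nP, mT, mT⟩

/-- The linear-functor data underlying a Frobenius functor. -/
def FrobFunctor.data {X : LDC C} {Y : LDC D} (G : FrobFunctor X Y) : LinearFunctorData X Y :=
  ⟨G.F, G.F, G.mT, G.mU, G.nP, G.nU, G.nP, G.nP, G.mT, G.mT⟩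

/-- A mix functor between mix categories: a Frobenius functor satisfying
`n⊥ ; m ; m⊤ = F(m)` ([mix-FF]). -/
def IsMixFunctor {M : MixCat C} {N : MixCat D} (G : FrobFunctor M.X N.X) : Prop :=
  G.nU ≫ N.mix ≫ G.mU = G.F.map M.mix

/-- The isomix condition [isomix-FF] on a Frobenius functor between isomix categories:
`m⊤ ; F(m⁻¹) ; n⊥ = m⁻¹`. -/
def IsIsomixFunctor {M : IsomixCat C} {N : IsomixCat D}
    (G : FrobFunctor M.X N.X) : Prop :=
  G.mU ≫ G.F.map M.mixInv ≫ G.nU = N.mixInv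

/-- A linear transformation `α : F ⇒ G` between (the data of) linear functors: a
monoidal transformation `α⊗ : F⊗ ⇒ G⊗` and a comonoidal transformation
`α⊕ : G⊕ ⇒ F⊕` satisfying [LT.1]–[LT.4]. -/
structure LinearTransf {X : LDC C} {Y : LDC D} (F G : LinearFunctorData X Y) where
  aT : ∀ A : C, F.Ft.obj A ⟶ G.Ft.obj A
  aT_natural : ∀ {A B : C} (f : A ⟶ B), F.Ft.map f ≫ aT B = aT A ≫ G.Ft.map f
  aP : ∀ A : C, G.Fp.obj A ⟶ F.Fp.obj A
  aP_natural : ∀ {A B : C} (f : A ⟶ B), G.Fp.map f ≫ aP B = aP A ≫ F.Fp.map f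
  aT_tensor : ∀ A B : C,
    Y.oth (aT A) (aT B) ≫ G.mT A B = F.mT A B ≫ aT (X.ot A B)
  aT_unit : F.mU ≫ aT X.tu = G.mU
  aP_cotensor : ∀ A B : C,
    aP (X.op A B) ≫ F.nP A B = G.nP A B ≫ Y.oph (aP A) (aP B)
  aP_counit : aP X.pu ≫ F.nU = G.nU
  lt1 : ∀ A B : C,
    aT (X.op A B) ≫ G.vtR A B ≫ Y.oph (aP A) (𝟙 (G.Ft.obj B))
      = F.vtR A B ≫ Y.oph (𝟙 (F.Fp.obj A)) (aT B)
  lt2 : ∀ A B : C,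
    aT (X.op A B) ≫ G.vtL A B ≫ Y.oph (𝟙 (G.Ft.obj A)) (aP B)
      = F.vtL A B ≫ Y.oph (aT A) (𝟙 (F.Fp.obj B))
  lt3 : ∀ A B : C,
    Y.oth (𝟙 (G.Fp.obj A)) (aT B) ≫ G.vpL A B ≫ aP (X.ot A B)
      = Y.oth (aP A) (𝟙 (F.Ft.obj B)) ≫ F.vpL A B
  lt4 : ∀ A B : C,
    Y.oth (aT A) (𝟙 (G.Fp.obj B)) ≫ G.vpR A B ≫ aP (X.ot A B)
      = Y.oth (𝟙 (F.Ft.obj A)) (aP B) ≫ F.vpR A B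

/-- `(η, ε) : A ⊣⊣ B` is a linear dual in an LDC: `η : ⊤ ⟶ A ⊕ B` and
`ε : B ⊗ A ⟶ ⊥` satisfy the two snake identities. -/
def IsLinearDual (X : LDC C) (A B : C) (η : X.tu ⟶ X.op A B) (ε : X.ot B A ⟶ X.pu) : Prop :=
  ((X.luT A).inv ≫ X.oth η (𝟙 A) ≫ X.distR A B A ≫ X.oph (𝟙 A) ε ≫ (X.ruP A).hom = 𝟙 A) ∧
  ((X.ruT B).inv ≫ X.oth (𝟙 B) η ≫ X.distL B A B ≫ X.oph ε (𝟙 B) ≫ (X.luP B).hom = 𝟙 B)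

/-- The degenerate LDC on a single monoidal structure (tensor = par), with the
associator isomorphisms as linear distributors. -/
def LDC.deg (Mo : MonoidalCategory C) : LDC C where
  T := Mo
  P := Mo
  distL A B X := (Mo.associator A B X).inv
  distR A B X := (Mo.associator A B X).hom
  distL_natural := by
    intro A A' B B' X X' f g h
    rw [Iso.comp_inv_eq, Category.assoc, Mo.associator_naturality, Iso.inv_hom_id_assoc]
  distR_natural := by
    intro A A' B B' X X' f g h
    exact Mo.associator_naturality f g h

end Mix
section Dagger

open Opposite

variable {C : Type u} [Category.{v} C]

/-- The data of a dagger on an LDC: a contravariant functor `(−)† : Cᵒᵖ ⥤ C` together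
with natural isomorphisms (laxors) `λ⊗ : A† ⊗ B† ≅ (A ⊕ B)†`, `λ⊕ : A† ⊕ B† ≅ (A ⊗ B)†`,
`λ⊤ : ⊤ ≅ ⊥†`, `λ⊥ : ⊥ ≅ ⊤†` and the involutor `ι : A ≅ A††`. -/
structure DagData (X : LDC C) where
  dag : Cᵒᵖ ⥤ C
  lamTens : ∀ A B : C, X.ot (dag.obj (op A)) (dag.obj (op B)) ≅ dag.obj (op (X.op A B))
  lamPar : ∀ A B : C, X.op (dag.obj (op A)) (dag.obj (op B)) ≅ dag.obj (op (X.ot A B))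
  lamTop : X.tu ≅ dag.obj (op X.pu)
  lamBot : X.pu ≅ dag.obj (op X.tu)
  invol : ∀ A : C, A ≅ dag.obj (op (dag.obj (op A)))

namespace DagData

variable {X : LDC C}

/-- `A†` -/
abbrev dg (D : DagData X) (A : C) : C := D.dag.obj (op A)

/-- `f† : B† ⟶ A†` for `f : A ⟶ B` -/
abbrev dgm (D : DagData X) {A B : C} (f : A ⟶ B) : D.dg B ⟶ D.dg A := D.dag.map f.op

end DagData

/-- The coherence laws [†-ldc.1]–[†-ldc.6] making `(X, dag, λ⊗, λ⊕, λ⊤, λ⊥, ι)` into a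
†-LDC (as spelled out in the unfolded definition of a †-linearly distributive category),
together with naturality of the laxors and of the involutor. -/
structure DagLaws {X : LDC C} (D : DagData X) : Prop where
  lamTens_natural : ∀ {A A' B B' : C} (f : A ⟶ A') (g : B ⟶ B'),
    X.oth (D.dgm f) (D.dgm g) ≫ (D.lamTens A B).hom
      = (D.lamTens A' B').hom ≫ D.dgm (X.oph f g)
  lamPar_natural : ∀ {A A' B B' : C} (f : A ⟶ A') (g : B ⟶ B'),
    X.oph (D.dgm f) (D.dgm g) ≫ (D.lamPar A B).hom
      = (D.lamPar A' B').hom ≫ D.dgm (X.oth f g)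
  invol_natural : ∀ {A B : C} (f : A ⟶ B),
    f ≫ (D.invol B).hom = (D.invol A).hom ≫ D.dgm (D.dgm f)
  /-- [†-ldc.1] for `λ⊗` and the associators -/
  ldc1a : ∀ A B Cc : C,
    (X.aT (D.dg A) (D.dg B) (D.dg Cc)).inv ≫ X.oth (D.lamTens A B).hom (𝟙 (D.dg Cc))
        ≫ (D.lamTens (X.op A B) Cc).hom
      = X.oth (𝟙 (D.dg A)) (D.lamTens B Cc).hom ≫ (D.lamTens A (X.op B Cc)).hom
          ≫ D.dgm (X.aP A B Cc).hom
  /-- [†-ldc.1] for `λ⊕` and the associators -/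
  ldc1b : ∀ A B Cc : C,
    (X.aP (D.dg A) (D.dg B) (D.dg Cc)).inv ≫ X.oph (D.lamPar A B).hom (𝟙 (D.dg Cc))
        ≫ (D.lamPar (X.ot A B) Cc).hom
      = X.oph (𝟙 (D.dg A)) (D.lamPar B Cc).hom ≫ (D.lamPar A (X.ot B Cc)).hom
          ≫ D.dgm (X.aT A B Cc).hom
  /-- [†-ldc.2] for `λ⊤` (left) -/
  ldc2a : ∀ A : C,
    X.oth D.lamTop.hom (𝟙 (D.dg A)) ≫ (D.lamTens X.pu A).hom
      = (X.luT (D.dg A)).hom ≫ D.dgm (X.luP A).hom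
  /-- [†-ldc.2] for `λ⊤` (right) -/
  ldc2b : ∀ A : C,
    X.oth (𝟙 (D.dg A)) D.lamTop.hom ≫ (D.lamTens A X.pu).hom
      = (X.ruT (D.dg A)).hom ≫ D.dgm (X.ruP A).hom
  /-- [†-ldc.2] for `λ⊥` (left) -/
  ldc2c : ∀ A : C,
    X.oph D.lamBot.hom (𝟙 (D.dg A)) ≫ (D.lamPar X.tu A).hom
      = (X.luP (D.dg A)).hom ≫ D.dgm (X.luT A).hom
  /-- [†-ldc.2] for `λ⊥` (right) -/
  ldc2d : ∀ A : C,
    X.oph (𝟙 (D.dg A)) D.lamBot.hom ≫ (D.lamPar A X.tu).hom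
      = (X.ruP (D.dg A)).hom ≫ D.dgm (X.ruT A).hom
  /-- [†-ldc.3] (first distributor square) -/
  ldc3a : ∀ A B Cc : C,
    X.distL (D.dg A) (D.dg B) (D.dg Cc) ≫ X.oph (D.lamTens A B).hom (𝟙 (D.dg Cc))
        ≫ (D.lamPar (X.op A B) Cc).hom
      = X.oth (𝟙 (D.dg A)) (D.lamPar B Cc).hom ≫ (D.lamTens A (X.ot B Cc)).hom
          ≫ D.dgm (X.distR A B Cc)
  /-- [†-ldc.3] (second distributor square) -/
  ldc3b : ∀ A B Cc : C,
    X.distR (D.dg A) (D.dg B) (D.dg Cc) ≫ X.oph (𝟙 (D.dg A)) (D.lamTens B Cc).hom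
        ≫ (D.lamPar A (X.op B Cc)).hom
      = X.oth (D.lamPar A B).hom (𝟙 (D.dg Cc)) ≫ (D.lamTens (X.ot A B) Cc).hom
          ≫ D.dgm (X.distL A B Cc)
  /-- [†-ldc.4] : `ι_{A⊕B} ; λ⊗† = (ι ⊕ ι) ; λ⊕` -/
  ldc4a : ∀ A B : C,
    (D.invol (X.op A B)).hom ≫ D.dgm (D.lamTens A B).hom
      = X.oph (D.invol A).hom (D.invol B).hom ≫ (D.lamPar (D.dg A) (D.dg B)).hom
  /-- [†-ldc.4] : `ι_{A⊗B} ; λ⊕† = (ι ⊗ ι) ; λ⊗` -/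
  ldc4b : ∀ A B : C,
    (D.invol (X.ot A B)).hom ≫ D.dgm (D.lamPar A B).hom
      = X.oth (D.invol A).hom (D.invol B).hom ≫ (D.lamTens (D.dg A) (D.dg B)).hom
  /-- [†-ldc.5] : `ι_⊥ ; λ⊤† = λ⊥` -/
  ldc5a : (D.invol X.pu).hom ≫ D.dgm D.lamTop.hom = D.lamBot.hom
  /-- [†-ldc.5] : `ι_⊤ ; λ⊥† = λ⊤` -/
  ldc5b : (D.invol X.tu).hom ≫ D.dgm D.lamBot.hom = D.lamTop.hom
  /-- [†-ldc.6] : `ι_{A†} = (ι_A⁻¹)†` -/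
  ldc6 : ∀ A : C, (D.invol (D.dg A)).hom = D.dgm ((D.invol A).inv)

/-- The [†-mix] condition for a †-LDC with a mix map: `λ⊥ ; m† = m ; λ⊤`. -/
def DagMixLaw (M : MixCat C) (D : DagData M.X) : Prop :=
  D.lamBot.hom ≫ D.dgm M.mix = M.mix ≫ D.lamTop.hom

end Dagger

/-!
The mixor commutes with the dagger up to the laxors: `mx_{A†,B†} ; λ⊕ = λ⊗ ; (mx_{A,B})†`.
To see this, write `mx_{A,B}` in its `∂R`-form (the mix coherence); by [†-ldc.3] its dagger is
a `∂L`-composite, and [†-ldc.2] together with [†-mix] identify that composite with the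
`∂L`-form of `mx_{A†,B†}`. So if `A` is in the core, every `mx_{A†,B†}` and `mx_{B†,A†}` is
invertible, and naturality of the mixor transports this along `ι : B ≅ B††` to every `B`.
-/

section DaggerCore

variable {C : Type u} [Category.{v} C]

namespace MixCat

variable (M : MixCat C)

theorem mx_natural {A A' B B' : C} (f : A ⟶ A') (g : B ⟶ B') :
    M.X.oth f g ≫ M.mx A' B' = M.mx A B ≫ M.X.oph f g := by
  have hlu : g ≫ (M.X.luP B').inv = (M.X.luP B).inv ≫ M.X.oph (𝟙 _) g := by
    simp only [M.X.P.id_tensorHom]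
    exact M.X.P.leftUnitor_inv_naturality g
  have hru : M.X.oth f (𝟙 _) ≫ (M.X.ruT A').hom = (M.X.ruT A).hom ≫ f := by
    simp only [M.X.T.tensorHom_id]
    exact M.X.T.rightUnitor_naturality f
  have hleft : M.X.oth f g ≫ M.X.oth (𝟙 A') ((M.X.luP B').inv ≫ M.X.oph M.mix (𝟙 B'))
      = M.X.oth (𝟙 A) ((M.X.luP B).inv ≫ M.X.oph M.mix (𝟙 B))
          ≫ M.X.oth f (M.X.oph (𝟙 _) g) := by
    simp only [M.X.T.tensorHom_comp_tensorHom, reassoc_of% hlu, M.X.P.tensorHom_comp_tensorHom,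
      Category.assoc, Category.id_comp, Category.comp_id]
  have hright : M.X.oph (M.X.oth f (𝟙 _)) g ≫ M.X.oph (M.X.ruT A').hom (𝟙 B')
      = M.X.oph (M.X.ruT A).hom (𝟙 B) ≫ M.X.oph f g := by
    simp only [M.X.P.tensorHom_comp_tensorHom, hru, Category.comp_id, Category.id_comp]
  rw [mx, reassoc_of% hleft, reassoc_of% (M.X.distL_natural f (𝟙 _) g), hright, mx]
  simp only [Category.assoc]

theorem isIso_mx_of_iso {A A' B B' : C} (e : A ≅ A') (e' : B ≅ B') [IsIso (M.mx A' B')] :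
    IsIso (M.mx A B) := by
  have h : M.mx A B = (M.X.T.tensorIso e e').hom ≫ M.mx A' B' ≫ (M.X.P.tensorIso e e').inv := by
    rw [← Category.assoc, Iso.eq_comp_inv]
    exact (M.mx_natural e.hom e'.hom).symm
  rw [h]
  infer_instance

end MixCat

namespace DagData

variable {X : LDC C} (D : DagData X)

theorem dgm_comp {A B E : C} (f : A ⟶ B) (g : B ⟶ E) : D.dgm (f ≫ g) = D.dgm g ≫ D.dgm f :=
  D.dag.map_comp g.op f.op

theorem dgm_id (A : C) : D.dgm (𝟙 A) = 𝟙 (D.dg A) :=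
  D.dag.map_id (Opposite.op A)

end DagData

namespace DagLaws

section

variable {X : LDC C} {D : DagData X}

theorem lamTens_hom_comp_dgm_ruP_inv (hD : DagLaws D) (A : C) :
    (D.lamTens A X.pu).hom ≫ D.dgm (X.ruP A).inv
      = X.oth (𝟙 (D.dg A)) D.lamTop.inv ≫ (X.ruT (D.dg A)).hom := by
  have h : X.oth (𝟙 _) D.lamTop.hom ≫ (D.lamTens A X.pu).hom ≫ D.dgm (X.ruP A).inv
      = (X.ruT (D.dg A)).hom := by
    rw [reassoc_of% (hD.ldc2b A), ← D.dgm_comp, Iso.inv_hom_id, D.dgm_id, Category.comp_id]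
  rw [← h]
  simp only [← Category.assoc, X.T.tensorHom_comp_tensorHom, Iso.inv_hom_id, Category.id_comp,
    X.T.id_tensorHom_id]

theorem lamTens_hom_comp_dgm_distR (hD : DagLaws D) {A A' P B B' : C}
    (f : A' ⟶ X.op A P) (g : X.ot P B ⟶ B') :
    (D.lamTens A B').hom ≫ D.dgm (X.oth f (𝟙 B) ≫ X.distR A P B ≫ X.oph (𝟙 A) g)
      = X.oth (𝟙 _) (D.dgm g ≫ (D.lamPar P B).inv) ≫ X.distL _ _ _
          ≫ X.oph ((D.lamTens A P).hom ≫ D.dgm f) (𝟙 _) ≫ (D.lamPar A' B).hom := by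
  have hdistR : (D.lamTens A (X.ot P B)).hom ≫ D.dgm (X.distR A P B)
      = X.oth (𝟙 _) (D.lamPar P B).inv ≫ X.distL _ _ _
          ≫ X.oph (D.lamTens A P).hom (𝟙 _) ≫ (D.lamPar (X.op A P) B).hom := by
    rw [hD.ldc3a]
    simp only [← Category.assoc, X.T.tensorHom_comp_tensorHom, Iso.inv_hom_id, Category.id_comp,
      X.T.id_tensorHom_id]
  have hg := hD.lamTens_natural (𝟙 A) g
  have hf := hD.lamPar_natural f (𝟙 B)
  rw [D.dgm_id] at hg hf
  rw [D.dgm_comp, D.dgm_comp, Category.assoc, ← reassoc_of% hg, reassoc_of% hdistR, ← hf]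
  simp only [X.T.tensorHom_comp_tensorHom_assoc, X.P.tensorHom_comp_tensorHom_assoc,
    Category.id_comp]

end

section Mix

variable {M : MixCat C} {D : DagData M.X}

theorem dgm_mix_tensorHom_comp_luT (hD : DagLaws D) (hmix : DagMixLaw M D) (B : C) :
    D.dgm (M.X.oth M.mix (𝟙 B) ≫ (M.X.luT B).hom) ≫ (D.lamPar M.X.pu B).inv
      = (M.X.luP (D.dg B)).inv ≫ M.X.oph (M.mix ≫ D.lamTop.hom) (𝟙 (D.dg B)) := by
  have hlu : D.dgm (M.X.luT B).hom
      = (M.X.luP (D.dg B)).inv ≫ M.X.oph D.lamBot.hom (𝟙 _) ≫ (D.lamPar M.X.tu B).hom := by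
    rw [hD.ldc2c, Iso.inv_hom_id_assoc]
  have hm := hD.lamPar_natural M.mix (𝟙 B)
  rw [D.dgm_id] at hm
  unfold DagMixLaw at hmix
  simp only [D.dgm_comp, hlu, Category.assoc, ← reassoc_of% hm, Iso.hom_inv_id,
    Category.comp_id, M.X.P.tensorHom_comp_tensorHom, hmix]

theorem mx_dg_comp_lamPar_hom (hD : DagLaws D) (hmix : DagMixLaw M D) (A B : C) :
    M.mx (D.dg A) (D.dg B) ≫ (D.lamPar A B).hom = (D.lamTens A B).hom ≫ D.dgm (M.mx A B) := by
  have hmx : M.mx A B = M.X.oth (M.X.ruP A).inv (𝟙 B) ≫ M.X.distR A M.X.pu B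
      ≫ M.X.oph (𝟙 A) (M.X.oth M.mix (𝟙 B) ≫ (M.X.luT B).hom) := M.mix_coh A B
  rw [hmx, hD.lamTens_hom_comp_dgm_distR, hD.dgm_mix_tensorHom_comp_luT hmix,
    hD.lamTens_hom_comp_dgm_ruP_inv]
  have hsplit :
      M.X.oth (𝟙 (D.dg A)) ((M.X.luP (D.dg B)).inv ≫ M.X.oph (M.mix ≫ D.lamTop.hom) (𝟙 _))
        = M.X.oth (𝟙 _) ((M.X.luP (D.dg B)).inv ≫ M.X.oph M.mix (𝟙 _))
            ≫ M.X.oth (𝟙 _) (M.X.oph D.lamTop.hom (𝟙 _)) := by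
    simp only [M.X.T.tensorHom_comp_tensorHom, M.X.P.tensorHom_comp_tensorHom, Category.assoc,
      Category.comp_id]
  rw [hsplit, Category.assoc, reassoc_of% (M.X.distL_natural (𝟙 _) D.lamTop.hom (𝟙 _)),
    MixCat.mx]
  simp only [Category.assoc, M.X.P.tensorHom_comp_tensorHom_assoc,
    M.X.T.tensorHom_comp_tensorHom_assoc, Iso.hom_inv_id, Category.id_comp,
    M.X.T.id_tensorHom_id]

theorem isIso_mx_dg (hD : DagLaws D) (hmix : DagMixLaw M D)
    (A B : C) [IsIso (M.mx A B)] : IsIso (M.mx (D.dg A) (D.dg B)) := by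
  rw [(Iso.eq_comp_inv _).mpr (hD.mx_dg_comp_lamPar_hom hmix A B)]
  infer_instance

end Mix

end DagLaws
end DaggerCore

theorem dagger_preserves_core
    {C : Type u} [Category.{v} C]
    (M : MixCat C) (D : DagData M.X) (hD : DagLaws D) (hmix : DagMixLaw M D)
    (A : C) (hA : M.inCore A) : M.inCore (D.dg A) := by
  obtain ⟨hleft, hright⟩ := hA
  refine ⟨fun B => ?_, fun B => ?_⟩
  · have := hleft (D.dg B)
    have := hD.isIso_mx_dg hmix A (D.dg B)
    exact M.isIso_mx_of_iso (Iso.refl _) (D.invol B)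
  · have := hright (D.dg B)
    have := hD.isIso_mx_dg hmix (D.dg B) A
    exact M.isIso_mx_of_iso (D.invol B) (Iso.refl _)
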